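/- Let X_1,…,X_n be drawn from a product distribution on 𝒳^n and let M be a k-pass streaming algorithm with private randomness. Then for all j ∈ [n] and all i ∈ [k]: I(X_{[1,j]}, M_{(≤i,[0,j-1])}; X_{[j+1,n]}, M_{(≤i,[j+1,n])} | M_{<i}, M_{(≤i,j)}) = 0. -/

import Mathlib

open scoped Classical
open Finset

noncomputable section

namespace MultiPassIC

/-- Probability of an event under a probability mass function `p` on a finite sample space. -/
def pr {Ω : Type} [Fintype Ω] (p : Ω → ℝ) (E : Ω → Prop) : ℝ :=
  ∑ ω, if E ω then p ω else 0

/-- `p` is a probability mass function on the finite type `Ω`. -/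
structure IsPMF {Ω : Type} [Fintype Ω] (p : Ω → ℝ) : Prop where
  nonneg : ∀ ω, 0 ≤ p ω
  sum_one : ∑ ω, p ω = 1

/-- Shannon entropy (base 2) of the random variable `A` under `p`. -/
def H {Ω : Type} [Fintype Ω] {α : Type} [Fintype α] (p : Ω → ℝ) (A : Ω → α) : ℝ :=
  -∑ a, pr p (fun ω => A ω = a) * Real.logb 2 (pr p (fun ω => A ω = a))

/-- Conditional mutual information `I(A ; B ∣ C)` (base 2), with the usual conventions
for vanishing probabilities. -/
def condMI {Ω : Type} [Fintype Ω] {α β γ : Type} [Fintype α] [Fintype β] [Fintype γ]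
    (p : Ω → ℝ) (A : Ω → α) (B : Ω → β) (C : Ω → γ) : ℝ :=
  ∑ a, ∑ b, ∑ c,
    pr p (fun ω => A ω = a ∧ B ω = b ∧ C ω = c) *
      Real.logb 2 ((pr p (fun ω => C ω = c) *
          pr p (fun ω => A ω = a ∧ B ω = b ∧ C ω = c)) /
        (pr p (fun ω => A ω = a ∧ C ω = c) * pr p (fun ω => B ω = b ∧ C ω = c)))

/-- Mutual information `I(A ; B)` (base 2). -/
def MI {Ω : Type} [Fintype Ω] {α β : Type} [Fintype α] [Fintype β]
    (p : Ω → ℝ) (A : Ω → α) (B : Ω → β) : ℝ :=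
  condMI p A B (fun _ => (0 : Fin 1))

/-- `X 0, …, X (n-1)` (the first `n` stream elements) are mutually independent under `p`,
i.e. they are drawn from a product distribution. -/
def IsProduct {Ω : Type} [Fintype Ω] {𝒳 : Type} (p : Ω → ℝ) (n : ℕ) (X : ℕ → Ω → 𝒳) : Prop :=
  ∀ x : ℕ → 𝒳,
    pr p (fun ω => ∀ j < n, X j ω = x j) =
      ∏ j ∈ Finset.range n, pr p (fun ω => X j ω = x j)

/-- A `k`-pass streaming algorithm on the input stream `X 0, …, X (n-1)` (0-indexed;
the paper's `X_j` is `X (j-1)`), over a finite sample space `Ω` with pmf `p`.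
`S` is the finite set of memory states, `Rv` the value space of the per-step private
randomness, `init` the initial memory state `M₀`, `R i j` the private randomness used at
step `j` of pass `i` (0-indexed), and `f i j` the corresponding transition function.
The field `indep` states that the initial state, all the per-step random seeds, and the
input stream are mutually independent. -/
structure Alg (Ω : Type) [Fintype Ω] (p : Ω → ℝ) (𝒳 : Type) [Fintype 𝒳]
    (n k : ℕ) (X : ℕ → Ω → 𝒳) where
  S : Type
  fintS : Fintype S
  Rv : Type
  fintR : Fintype Rv
  init : Ω → S
  R : ℕ → ℕ → Ω → Rv
  f : ℕ → ℕ → 𝒳 → S → Rv → S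
  indep : ∀ (m : S) (r : ℕ → ℕ → Rv) (x : ℕ → 𝒳),
    pr p (fun ω => init ω = m ∧ (∀ i < k, ∀ j < n, R i j ω = r i j) ∧ (∀ j < n, X j ω = x j))
      = pr p (fun ω => init ω = m)
        * (∏ i ∈ Finset.range k, ∏ j ∈ Finset.range n, pr p (fun ω => R i j ω = r i j))
        * pr p (fun ω => ∀ j < n, X j ω = x j)

attribute [instance] Alg.fintS Alg.fintR

variable {Ω : Type} [Fintype Ω] {p : Ω → ℝ} {𝒳 : Type} [Fintype 𝒳] {n k : ℕ} {X : ℕ → Ω → 𝒳}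

/-- Running pass `i` (0-indexed) of the algorithm for `j` steps starting from `ini`. -/
def Alg.runPass (M : Alg Ω p 𝒳 n k X) (i : ℕ) (ini : Ω → M.S) : ℕ → Ω → M.S
  | 0 => ini
  | j + 1 => fun ω =>
      if j < n ∧ i < k then
        M.f i j (X j ω) (M.runPass i ini j ω) (M.R i j ω)
      else M.runPass i ini j ω

/-- `M.passEnd i` is the memory state at the end of pass `i`; `M.passEnd 0 = M₀` is the
initial state, and `M.passEnd i` is the paper's `M_i = M_{(i,n)}`. -/
def Alg.passEnd (M : Alg Ω p 𝒳 n k X) : ℕ → Ω → M.S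
  | 0 => M.init
  | i + 1 => M.runPass i (M.passEnd i) n

/-- `M.st i j` is the memory state after reading `j` elements in pass `i+1`;
it is the paper's `M_{(i+1, j)}`. -/
def Alg.st (M : Alg Ω p 𝒳 n k X) (i j : ℕ) : Ω → M.S :=
  M.runPass i (M.passEnd i) j

/-- The multi-pass information cost
`MIC(M, μ) = Σ_{i=1}^{k} Σ_{j=1}^{n} Σ_{ℓ=1}^{j} I(M_{(i,j)}; X_ℓ | M_{(≤i,ℓ-1)}, M_{(≤i-1,j)})
  + Σ_{i=1}^{k} Σ_{j=1}^{n} Σ_{ℓ=j+1}^{n} I(M_{(i,j)}; X_ℓ | M_{(≤i-1,ℓ-1)}, M_{(≤i-1,j)})`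
(all summation indices below are 0-indexed shifts of the paper's 1-indexed ones). -/
def Alg.MIC (M : Alg Ω p 𝒳 n k X) : ℝ :=
  (∑ i ∈ Finset.range k, ∑ j ∈ Finset.range n, ∑ l ∈ Finset.range (j + 1),
    condMI p (M.st i (j + 1)) (X l)
      (fun ω => ((fun r : Fin (i + 1) => M.st r.1 l ω),
                 (fun r : Fin i => M.st r.1 (j + 1) ω))))
  + (∑ i ∈ Finset.range k, ∑ j ∈ Finset.range n, ∑ l ∈ Finset.Ico (j + 1) n,
    condMI p (M.st i (j + 1)) (X l)
      (fun ω => ((fun r : Fin i => M.st r.1 l ω),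
                 (fun r : Fin i => M.st r.1 (j + 1) ω))))

/-- The conditional information cost
`MIC_cond(M, μ) = Σ_{j=1}^{n} Σ_{ℓ=1}^{j} I(M_{(≤k,j)}; X_ℓ | M_{<k}, M_{(≤k,ℓ-1)})`. -/
def Alg.MICcond (M : Alg Ω p 𝒳 n k X) : ℝ :=
  ∑ j ∈ Finset.range n, ∑ l ∈ Finset.range (j + 1),
    condMI p (fun ω => fun r : Fin k => M.st r.1 (j + 1) ω) (X l)
      (fun ω => ((fun r : Fin k => M.passEnd r.1 ω),
                 (fun r : Fin k => M.st r.1 l ω)))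

end MultiPassIC

/-!
Split the sample at position `j`: the *past* consists of the initial memory state and of the
inputs and private seeds (of all passes) at positions `< j`, the *future* of the inputs and seeds
at positions `≥ j`. The independence assumptions make past and future independent. Inside pass
`r`, the states before position `j` are determined by the past and `M_{r-1}`, and the states after
`j` by the future and `M_{(r,j)}`; an induction on `r` then shows that every level set
`{M_{<i}, M_{(≤i,j)} = c}` is a product `{past ∈ H} ∩ {future ∈ G}`. On such a level set the first
argument is a function of the past and the second a function of the future, so they are
conditionally independent and every term of the conditional mutual information vanishes.
-/

namespace MultiPassIC

section FiniteProbability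

variable {Ω : Type} [Fintype Ω] {p : Ω → ℝ}

theorem IsPMF.nonempty (hp : IsPMF p) : Nonempty Ω := by
  by_contra h
  have := hp.sum_one
  simp [not_nonempty_iff.mp h] at this

theorem pr_congr {E E' : Ω → Prop} (h : ∀ ω, E ω ↔ E' ω) : pr p E = pr p E' :=
  congrArg (pr p) (funext fun ω => propext (h ω))

theorem pr_true (hp : IsPMF p) : pr p (fun _ => True) = 1 := by
  simpa [pr] using hp.sum_one

theorem pr_comp_eq_sum {γ : Type} [Fintype γ] (Z : Ω → γ) (R : γ → Prop) :
    pr p (fun ω => R (Z ω)) = ∑ z with R z, pr p (fun ω => Z ω = z) := by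
  unfold pr
  rw [Finset.sum_comm]
  refine Finset.sum_congr rfl fun ω _ => ?_
  rw [Finset.sum_ite_eq]
  simp

theorem pr_and_eq_mul_of_pr_eq_mul (hp : IsPMF p) {α β : Type} [Fintype α] [Fintype β]
    {P : Ω → α} {F : Ω → β} {f : α → ℝ} {g : β → ℝ}
    (h : ∀ s t, pr p (fun ω => P ω = s ∧ F ω = t) = f s * g t) (Q₁ : α → Prop) (Q₂ : β → Prop) :
    pr p (fun ω => Q₁ (P ω) ∧ Q₂ (F ω)) = pr p (fun ω => Q₁ (P ω)) * pr p (fun ω => Q₂ (F ω)) := by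
  have key : ∀ (Q₁ : α → Prop) (Q₂ : β → Prop),
      pr p (fun ω => Q₁ (P ω) ∧ Q₂ (F ω)) = (∑ s with Q₁ s, f s) * ∑ t with Q₂ t, g t := by
    intro Q₁ Q₂
    have := pr_comp_eq_sum (p := p) (fun ω => (P ω, F ω)) (fun z => Q₁ z.1 ∧ Q₂ z.2)
    simp only [Prod.ext_iff, h, Finset.sum_filter, Fintype.sum_prod_type] at this
    rw [this, Finset.sum_mul_sum]
    simp only [Finset.sum_filter, ite_and, Finset.sum_ite_irrel, Finset.sum_const_zero]
  have total : (∑ s, f s) * ∑ t, g t = 1 := by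
    simpa [pr_true hp] using (key (fun _ => True) (fun _ => True)).symm
  have h₁ := key Q₁ (fun _ => True)
  have h₂ := key (fun _ => True) Q₂
  simp only [and_true, true_and, Finset.filter_true] at h₁ h₂
  rw [key, h₁, h₂]
  linear_combination (-(∑ s with Q₁ s, f s) * ∑ t with Q₂ t, g t) * total

theorem pr_restrict_eq_mul {ι β γ : Type} [Fintype ι] {Y : Ω → γ} {D : ι → Ω → β}
    {w₀ : γ → ℝ} {w : ι → β → ℝ}
    (h : ∀ (m : γ) (d : ι → β), pr p (fun ω => Y ω = m ∧ ∀ l, D l ω = d l) = w₀ m * ∏ l, w l (d l))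
    (q : ι → Prop) (s : γ × ({l // q l} → β)) (t : {l // ¬ q l} → β) :
    pr p (fun ω => (Y ω, fun l : {l // q l} => D l ω) = s ∧ (fun l : {l // ¬ q l} => D l ω) = t)
      = (w₀ s.1 * ∏ l : {l // q l}, w l (s.2 l)) * ∏ l : {l // ¬ q l}, w l (t l) := by
  obtain ⟨m, u⟩ := s
  let d (l : ι) : β := if hq : q l then u ⟨l, hq⟩ else t ⟨l, hq⟩
  have hev : ∀ ω, ((Y ω, fun l : {l // q l} => D l ω) = (m, u)
      ∧ (fun l : {l // ¬ q l} => D l ω) = t) ↔ Y ω = m ∧ ∀ l, D l ω = d l := by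
    intro ω
    simp only [Prod.mk.injEq, funext_iff, Subtype.forall, d]
    constructor
    · rintro ⟨⟨hm, hu⟩, ht⟩
      refine ⟨hm, fun l => ?_⟩
      split_ifs with hq
      exacts [hu l hq, ht l hq]
    · rintro ⟨hm, hd⟩
      refine ⟨⟨hm, fun l hq => ?_⟩, fun l hq => ?_⟩
      · simpa [hq] using hd l
      · simpa [hq] using hd l
  rw [pr_congr hev, h, ← Fintype.prod_subtype_mul_prod_subtype q, mul_assoc]
  congr 2 <;> refine Fintype.prod_congr _ _ fun l => ?_
  · simp only [d, dif_pos l.2]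
  · simp only [d, dif_neg l.2]

theorem pr_and_restrict_eq_mul (hp : IsPMF p) {ι β γ : Type} [Fintype ι] [Fintype β] [Fintype γ]
    {Y : Ω → γ} {D : ι → Ω → β} {w₀ : γ → ℝ} {w : ι → β → ℝ}
    (h : ∀ (m : γ) (d : ι → β), pr p (fun ω => Y ω = m ∧ ∀ l, D l ω = d l) = w₀ m * ∏ l, w l (d l))
    (q : ι → Prop) (Q₁ : γ × ({l // q l} → β) → Prop) (Q₂ : ({l // ¬ q l} → β) → Prop) :
    pr p (fun ω => Q₁ (Y ω, fun l : {l // q l} => D l ω) ∧ Q₂ (fun l : {l // ¬ q l} => D l ω))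
      = pr p (fun ω => Q₁ (Y ω, fun l : {l // q l} => D l ω))
        * pr p (fun ω => Q₂ (fun l : {l // ¬ q l} => D l ω)) :=
  pr_and_eq_mul_of_pr_eq_mul hp (f := fun s => w₀ s.1 * ∏ l : {l // q l}, w l (s.2 l))
    (g := fun t => ∏ l : {l // ¬ q l}, w l (t l)) (pr_restrict_eq_mul h q) Q₁ Q₂

variable {α β γ : Type} [Fintype α] [Fintype β] [Fintype γ]

theorem condMI_eq_zero_of_mul_eq {A : Ω → α} {B : Ω → β} {C : Ω → γ}
    (h : ∀ a b c, pr p (fun ω => C ω = c) * pr p (fun ω => A ω = a ∧ B ω = b ∧ C ω = c)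
      = pr p (fun ω => A ω = a ∧ C ω = c) * pr p (fun ω => B ω = b ∧ C ω = c)) :
    condMI p A B C = 0 := by
  refine Finset.sum_eq_zero fun a _ => Finset.sum_eq_zero fun b _ =>
    Finset.sum_eq_zero fun c _ => ?_
  rw [← h]
  -- `x / x` is `0` or `1`, and `logb 2` vanishes at both
  rcases eq_or_ne (pr p (fun ω => C ω = c) * pr p (fun ω => A ω = a ∧ B ω = b ∧ C ω = c)) 0
    with h0 | h0
  · rw [h0, zero_div, Real.logb_zero, mul_zero]
  · rw [div_self h0, Real.logb_one, mul_zero]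

theorem condMI_eq_zero_of_indep_rectangle {δ ε : Type} {A : Ω → α} {B : Ω → β} {C : Ω → γ}
    {P : Ω → δ} {F : Ω → ε}
    (hind : ∀ (Q₁ : δ → Prop) (Q₂ : ε → Prop), pr p (fun ω => Q₁ (P ω) ∧ Q₂ (F ω))
      = pr p (fun ω => Q₁ (P ω)) * pr p (fun ω => Q₂ (F ω)))
    (hC : ∀ ω ω₁ ω₂, P ω₁ = P ω → F ω₂ = F ω → C ω₁ = C ω₂ → C ω = C ω₁)
    (hA : ∀ ω ω', P ω = P ω' → C ω = C ω' → A ω = A ω')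
    (hB : ∀ ω ω', F ω = F ω' → C ω = C ω' → B ω = B ω') :
    condMI p A B C = 0 := by
  refine condMI_eq_zero_of_mul_eq fun a b c => ?_
  let H (s : δ) : Prop := ∃ ω, P ω = s ∧ C ω = c
  let U (s : δ) : Prop := ∃ ω, P ω = s ∧ A ω = a ∧ C ω = c
  let G (t : ε) : Prop := ∃ ω, F ω = t ∧ C ω = c
  let V (t : ε) : Prop := ∃ ω, F ω = t ∧ B ω = b ∧ C ω = c
  have hc : ∀ ω ω₁ ω₂, P ω₁ = P ω → C ω₁ = c → F ω₂ = F ω → C ω₂ = c → C ω = c :=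
    fun ω ω₁ ω₂ h₁ hc₁ h₂ hc₂ => (hC ω ω₁ ω₂ h₁ h₂ (hc₁.trans hc₂.symm)).trans hc₁
  have eC : ∀ ω, C ω = c ↔ H (P ω) ∧ G (F ω) := by
    refine fun ω => ⟨fun h => ⟨⟨ω, rfl, h⟩, ⟨ω, rfl, h⟩⟩, ?_⟩
    rintro ⟨⟨ω₁, h₁, hc₁⟩, ⟨ω₂, h₂, hc₂⟩⟩
    exact hc ω ω₁ ω₂ h₁ hc₁ h₂ hc₂
  have eAC : ∀ ω, A ω = a ∧ C ω = c ↔ U (P ω) ∧ G (F ω) := by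
    refine fun ω => ⟨fun h => ⟨⟨ω, rfl, h⟩, ⟨ω, rfl, h.2⟩⟩, ?_⟩
    rintro ⟨⟨ω₁, h₁, ha₁, hc₁⟩, ⟨ω₂, h₂, hc₂⟩⟩
    have hcω := hc ω ω₁ ω₂ h₁ hc₁ h₂ hc₂
    exact ⟨(hA ω ω₁ h₁.symm (hcω.trans hc₁.symm)).trans ha₁, hcω⟩
  have eBC : ∀ ω, B ω = b ∧ C ω = c ↔ H (P ω) ∧ V (F ω) := by
    refine fun ω => ⟨fun h => ⟨⟨ω, rfl, h.2⟩, ⟨ω, rfl, h⟩⟩, ?_⟩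
    rintro ⟨⟨ω₁, h₁, hc₁⟩, ⟨ω₂, h₂, hb₂, hc₂⟩⟩
    have hcω := hc ω ω₁ ω₂ h₁ hc₁ h₂ hc₂
    exact ⟨(hB ω ω₂ h₂.symm (hcω.trans hc₂.symm)).trans hb₂, hcω⟩
  have eABC : ∀ ω, A ω = a ∧ B ω = b ∧ C ω = c ↔ U (P ω) ∧ V (F ω) := by
    refine fun ω => ⟨fun h => ⟨⟨ω, rfl, h.1, h.2.2⟩, ⟨ω, rfl, h.2⟩⟩, ?_⟩
    rintro ⟨⟨ω₁, h₁, ha₁, hc₁⟩, ⟨ω₂, h₂, hb₂, hc₂⟩⟩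
    have hcω := hc ω ω₁ ω₂ h₁ hc₁ h₂ hc₂
    exact ⟨(hA ω ω₁ h₁.symm (hcω.trans hc₁.symm)).trans ha₁,
      (hB ω ω₂ h₂.symm (hcω.trans hc₂.symm)).trans hb₂, hcω⟩
  rw [pr_congr eC, pr_congr eAC, pr_congr eBC, pr_congr eABC, hind, hind, hind, hind]
  ring

end FiniteProbability

section Streaming

variable {Ω : Type} [Fintype Ω] {p : Ω → ℝ} {𝒳 : Type} [Fintype 𝒳] {n k : ℕ}
  {X : ℕ → Ω → 𝒳}

def Alg.stepData (M : Alg Ω p 𝒳 n k X) (l : ℕ) (ω : Ω) : 𝒳 × (Fin k → M.Rv) :=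
  (X l ω, fun i => M.R i l ω)

theorem Alg.pr_init_eq_and_stepData_eq [Nonempty Ω] (M : Alg Ω p 𝒳 n k X) (hprod : IsProduct p n X)
    (m : M.S) (d : Fin n → 𝒳 × (Fin k → M.Rv)) :
    pr p (fun ω => M.init ω = m ∧ ∀ l : Fin n, M.stepData l ω = d l)
      = pr p (fun ω => M.init ω = m) * ∏ l : Fin n, (pr p (fun ω => X l ω = (d l).1)
          * ∏ i : Fin k, pr p (fun ω => M.R i l ω = (d l).2 i)) := by
  obtain ⟨ω₀⟩ := ‹Nonempty Ω›
  let x (l : ℕ) : 𝒳 := if h : l < n then (d ⟨l, h⟩).1 else X l ω₀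
  let r (i l : ℕ) : M.Rv := if h : i < k ∧ l < n then (d ⟨l, h.2⟩).2 ⟨i, h.1⟩ else M.R i l ω₀
  have hev : ∀ ω, (M.init ω = m ∧ ∀ l : Fin n, M.stepData l ω = d l) ↔
      M.init ω = m ∧ (∀ i < k, ∀ l < n, M.R i l ω = r i l) ∧ ∀ l < n, X l ω = x l := by
    intro ω
    simp only [Alg.stepData, Prod.ext_iff, funext_iff, Fin.forall_iff, forall_and, x, r]
    constructor
    · rintro ⟨hm, hX, hR⟩
      refine ⟨hm, fun i hi l hl => ?_, fun l hl => ?_⟩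
      · simpa [hi, hl] using hR l hl i hi
      · simpa [hl] using hX l hl
    · rintro ⟨hm, hR, hX⟩
      refine ⟨hm, fun l hl => ?_, fun l hl i hi => ?_⟩
      · simpa [hl] using hX l hl
      · simpa [hi, hl] using hR i hi l hl
  have hX : pr p (fun ω => ∀ l < n, X l ω = x l)
      = ∏ l : Fin n, pr p (fun ω => X l ω = (d l).1) := by
    rw [hprod, Finset.prod_range (fun l => pr p (fun ω => X l ω = x l))]
    simp [x]
  have hR : ∏ i ∈ Finset.range k, ∏ l ∈ Finset.range n, pr p (fun ω => M.R i l ω = r i l)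
      = ∏ l : Fin n, ∏ i : Fin k, pr p (fun ω => M.R i l ω = (d l).2 i) := by
    rw [Finset.prod_range]
    simp only [Finset.prod_range (fun l => pr p (fun ω => M.R _ l ω = r _ l))]
    rw [Finset.prod_comm]
    simp [r]
  rw [pr_congr hev, M.indep, hX, hR, Finset.prod_mul_distrib]
  ring

def Alg.past (M : Alg Ω p 𝒳 n k X) (j : ℕ) (ω : Ω) :
    M.S × ({l : Fin n // l.1 < j} → 𝒳 × (Fin k → M.Rv)) :=
  (M.init ω, fun l => M.stepData l ω)

def Alg.future (M : Alg Ω p 𝒳 n k X) (j : ℕ) (ω : Ω) :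
    {l : Fin n // ¬ l.1 < j} → 𝒳 × (Fin k → M.Rv) :=
  fun l => M.stepData l ω

theorem Alg.indep_past_future (M : Alg Ω p 𝒳 n k X) (hp : IsPMF p) (hprod : IsProduct p n X)
    (j : ℕ) (Q₁ : M.S × ({l : Fin n // l.1 < j} → 𝒳 × (Fin k → M.Rv)) → Prop)
    (Q₂ : ({l : Fin n // ¬ l.1 < j} → 𝒳 × (Fin k → M.Rv)) → Prop) :
    pr p (fun ω => Q₁ (M.past j ω) ∧ Q₂ (M.future j ω))
      = pr p (fun ω => Q₁ (M.past j ω)) * pr p (fun ω => Q₂ (M.future j ω)) := by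
  have := hp.nonempty
  exact pr_and_restrict_eq_mul hp (w₀ := fun m => pr p (fun ω => M.init ω = m))
    (w := fun (l : Fin n) (d : 𝒳 × (Fin k → M.Rv)) =>
      pr p (fun ω => X l ω = d.1) * ∏ i : Fin k, pr p (fun ω => M.R i l ω = d.2 i))
    (M.pr_init_eq_and_stepData_eq hprod) (fun l => l.1 < j) Q₁ Q₂

theorem Alg.runPass_congr (M : Alg Ω p 𝒳 n k X) {i t₀ t : ℕ} {ini ini' : Ω → M.S} {ω ω' : Ω}
    (ht : t₀ ≤ t) (h₀ : M.runPass i ini t₀ ω = M.runPass i ini' t₀ ω')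
    (hstep : ∀ l, t₀ ≤ l → l < t → l < n → i < k → X l ω = X l ω' ∧ M.R i l ω = M.R i l ω') :
    M.runPass i ini t ω = M.runPass i ini' t ω' := by
  induction t, ht using Nat.le_induction with
  | base => exact h₀
  | succ t ht ih =>
    have ih := ih fun l h₁ h₂ => hstep l h₁ (by omega)
    simp only [Alg.runPass]
    split_ifs with hg
    · obtain ⟨hX, hR⟩ := hstep t ht (by omega) hg.1 hg.2
      rw [ih, hX, hR]
    · exact ih

theorem Alg.X_eq_and_R_eq_of_stepData_eq (M : Alg Ω p 𝒳 n k X) {i l : ℕ} {ω ω' : Ω}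
    (h : M.stepData l ω = M.stepData l ω') (hi : i < k) :
    X l ω = X l ω' ∧ M.R i l ω = M.R i l ω' :=
  ⟨congrArg Prod.fst h, congrFun (congrArg Prod.snd h) ⟨i, hi⟩⟩

theorem Alg.stepData_eq_of_past_eq (M : Alg Ω p 𝒳 n k X) {j l : ℕ} {ω ω' : Ω}
    (h : M.past j ω = M.past j ω') (hl : l < j) (hln : l < n) :
    M.stepData l ω = M.stepData l ω' :=
  congrFun (congrArg Prod.snd h) ⟨⟨l, hln⟩, hl⟩

theorem Alg.stepData_eq_of_future_eq (M : Alg Ω p 𝒳 n k X) {j l : ℕ} {ω ω' : Ω}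
    (h : M.future j ω = M.future j ω') (hl : j ≤ l) (hln : l < n) :
    M.stepData l ω = M.stepData l ω' :=
  congrFun h ⟨⟨l, hln⟩, Nat.not_lt.mpr hl⟩

theorem Alg.st_congr_of_past_eq (M : Alg Ω p 𝒳 n k X) {i j t : ℕ} {ω ω' : Ω}
    (h : M.past j ω = M.past j ω') (hpe : M.passEnd i ω = M.passEnd i ω') (ht : t ≤ j) :
    M.st i t ω = M.st i t ω' :=
  M.runPass_congr t.zero_le hpe fun l _ hl hln hi =>
    M.X_eq_and_R_eq_of_stepData_eq (M.stepData_eq_of_past_eq h (by omega) hln) hi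

theorem Alg.st_congr_of_future_eq (M : Alg Ω p 𝒳 n k X) {i j t : ℕ} {ω ω' : Ω}
    (h : M.future j ω = M.future j ω') (hst : M.st i j ω = M.st i j ω') (ht : j ≤ t) :
    M.st i t ω = M.st i t ω' :=
  M.runPass_congr ht hst fun _ hl _ hln hi =>
    M.X_eq_and_R_eq_of_stepData_eq (M.stepData_eq_of_future_eq h hl hln) hi

theorem Alg.passEnd_eq_and_st_eq_of_past_future (M : Alg Ω p 𝒳 n k X) {i j : ℕ} (hjn : j ≤ n)
    {ω ω₁ ω₂ : Ω} (h₁ : M.past j ω₁ = M.past j ω) (h₂ : M.future j ω₂ = M.future j ω)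
    (h₁₂ : ∀ r < i, M.passEnd r ω₁ = M.passEnd r ω₂ ∧ M.st r j ω₁ = M.st r j ω₂) :
    ∀ r < i, M.passEnd r ω = M.passEnd r ω₁ ∧ M.st r j ω = M.st r j ω₁ := by
  intro r hr
  induction r with
  | zero =>
    have hpe : M.passEnd 0 ω = M.passEnd 0 ω₁ := (congrArg Prod.fst h₁).symm
    exact ⟨hpe, M.st_congr_of_past_eq h₁.symm hpe le_rfl⟩
  | succ r ih =>
    have hst := (ih (by omega)).2
    have hpe : M.passEnd (r + 1) ω = M.passEnd (r + 1) ω₁ := calc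
      M.passEnd (r + 1) ω = M.st r n ω := rfl
      _ = M.st r n ω₂ := M.st_congr_of_future_eq h₂.symm (hst.trans (h₁₂ r (by omega)).2) hjn
      _ = M.passEnd (r + 1) ω₁ := (h₁₂ (r + 1) hr).1.symm
    exact ⟨hpe, M.st_congr_of_past_eq h₁.symm hpe le_rfl⟩

end Streaming

/-- Corollary `indep1`: for a `k`-pass streaming algorithm on a product
distribution, for all `j ∈ [n]` and `i ∈ [k]`:
`I(X_{[1,j]}, M_{(≤i,[0,j-1])}; X_{[j+1,n]}, M_{(≤i,[j+1,n])} | M_{<i}, M_{(≤i,j)}) = 0`.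
(0-shifted indices: the paper's `X_ℓ` is `X (ℓ-1)`, `M_{(r,q)}` is `M.st (r-1) q`,
and `M_r` is `M.passEnd r`.) -/
theorem indep_past_future_states
    {Ω : Type} [Fintype Ω] {p : Ω → ℝ} {𝒳 : Type} [Fintype 𝒳] {n k : ℕ}
    {X : ℕ → Ω → 𝒳}
    (hp : IsPMF p) (hprod : IsProduct p n X)
    (M : Alg Ω p 𝒳 n k X) :
    ∀ j : ℕ, 1 ≤ j → j ≤ n → ∀ i : ℕ, 1 ≤ i → i ≤ k →
      condMI p
        (fun ω => ((fun r : Fin j => X r.1 ω),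
                   (fun (i' : Fin i) (r : Fin j) => M.st i'.1 r.1 ω)))
        (fun ω => ((fun r : Fin (n - j) => X (j + r.1) ω),
                   (fun (i' : Fin i) (r : Fin (n - j)) => M.st i'.1 (j + 1 + r.1) ω)))
        (fun ω => ((fun r : Fin i => M.passEnd r.1 ω),
                   (fun r : Fin i => M.st r.1 j ω))) = 0 := by
  intro j _ hjn i _ _
  refine condMI_eq_zero_of_indep_rectangle (M.indep_past_future hp hprod j) ?_ ?_ ?_
  · intro ω ω₁ ω₂ h₁ h₂ h₁₂
    obtain ⟨hpe, hst⟩ := Prod.ext_iff.mp h₁₂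
    have key := M.passEnd_eq_and_st_eq_of_past_future hjn h₁ h₂ fun r hr =>
      ⟨congrFun hpe ⟨r, hr⟩, congrFun hst ⟨r, hr⟩⟩
    exact Prod.ext (funext fun r => (key r r.2).1) (funext fun r => (key r r.2).2)
  · intro ω ω' h hC
    refine Prod.ext (funext fun r => ?_) (funext₂ fun i' r => ?_)
    · exact congrArg Prod.fst (M.stepData_eq_of_past_eq h r.2 (by omega))
    · exact M.st_congr_of_past_eq h (congrFun (Prod.ext_iff.mp hC).1 i') r.2.le
  · intro ω ω' h hC
    refine Prod.ext (funext fun r => ?_) (funext₂ fun i' r => ?_)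
    · exact congrArg Prod.fst (M.stepData_eq_of_future_eq h (by omega) (by omega))
    · exact M.st_congr_of_future_eq h (congrFun (Prod.ext_iff.mp hC).2 i') (by omega)

end MultiPassIC
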